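/- arXiv:math/0010217 — 3 statements merged into one kernel-verified Lean document; each statement's English description precedes it below -/
import Mathlib

section
/- For every natural number n ≥ 1, the set of additive subgroups of ℤ × ℤ of index n is finite and has exactly σ(n) elements, where σ(n) is the sum of the positive divisors of n. (This is the count of degree-n connected unbranched covers of the torus with a marked point used in the paper's computation of the genus-one invariants of T², whose generating function is G(t) = ∑ σ(n) t^n.) -/
/-!
A subgroup `H` of index `n ≠ 0` in `ℤ × ℤ` has a unique basis in Hermite normal form
`(a, b), (0, d)` with `a * d = n` and `0 ≤ b < d`: `a` is the index of the projection of `H` to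
the first factor, `d` the index of `H ∩ (0 × ℤ)` in `0 × ℤ` (so `a * d = n`), and `b` is the
second coordinate, reduced mod `d`, of any element of `H` with first coordinate `a`. Hence the
subgroups of index `n` are counted by the pairs `a * d = n` together with a residue `b` mod `d`,
which gives `∑_{d ∣ n} d`.
-/

namespace AddSubgroup

theorem index_eq_index_map_mul_relIndex_ker {G G' : Type*} [AddGroup G] [AddGroup G']
    {f : G →+ G'} (hf : Function.Surjective f) (H : AddSubgroup G) [H.Normal] :
    H.index = (H.map f).index * H.relIndex f.ker := by
  rw [index_map, f.range_eq_top_of_surjective hf, index_top, mul_one,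
    ← relIndex_sup_left f.ker H, mul_comm, relIndex_mul_index le_sup_left]

theorem index_eq_index_map_fst_mul_index_comap_inr {A B : Type*} [AddCommGroup A]
    [AddCommGroup B] (H : AddSubgroup (A × B)) :
    H.index = (H.map (AddMonoidHom.fst A B)).index * (H.comap (AddMonoidHom.inr A B)).index := by
  rw [index_eq_index_map_mul_relIndex_ker (f := AddMonoidHom.fst A B) Prod.fst_surjective,
    index_comap]
  congr 2
  ext ⟨x, y⟩
  simp [eq_comm, mem_prod]

end AddSubgroup

open AddSubgroup

def hermiteLattice (a b d : ℕ) : AddSubgroup (ℤ × ℤ) :=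
  closure {((a : ℤ), (b : ℤ)), (0, (d : ℤ))}

theorem mem_hermiteLattice {a b d : ℕ} {p : ℤ × ℤ} :
    p ∈ hermiteLattice a b d ↔ ∃ m k : ℤ, (m * a, m * b + k * d) = p := by
  simp [hermiteLattice, mem_closure_pair, Prod.ext_iff]

theorem map_fst_hermiteLattice (a b d : ℕ) :
    (hermiteLattice a b d).map (AddMonoidHom.fst ℤ ℤ) = zmultiples (a : ℤ) := by
  ext x
  simp [mem_hermiteLattice, mem_zmultiples_iff]

theorem comap_inr_hermiteLattice {a : ℕ} (ha : a ≠ 0) (b d : ℕ) :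
    (hermiteLattice a b d).comap (AddMonoidHom.inr ℤ ℤ) = zmultiples (d : ℤ) := by
  ext y
  simp [mem_hermiteLattice, mem_zmultiples_iff, ha]

theorem index_hermiteLattice {a : ℕ} (ha : a ≠ 0) (b d : ℕ) :
    (hermiteLattice a b d).index = a * d := by
  rw [index_eq_index_map_fst_mul_index_comap_inr, map_fst_hermiteLattice,
    comap_inr_hermiteLattice ha, Int.index_zmultiples, Int.index_zmultiples, Int.natAbs_natCast,
    Int.natAbs_natCast]

theorem hermiteLattice_inj {a b d a' b' d' : ℕ} (ha : a ≠ 0) (ha' : a' ≠ 0) (hb : b < d)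
    (hb' : b' < d') :
    hermiteLattice a b d = hermiteLattice a' b' d' ↔ a = a' ∧ b = b' ∧ d = d' := by
  refine ⟨fun h ↦ ?_, by rintro ⟨rfl, rfl, rfl⟩; rfl⟩
  have hfst := congrArg (fun L ↦ (L.map (AddMonoidHom.fst ℤ ℤ)).index) h
  have hinr := congrArg (fun L ↦ (L.comap (AddMonoidHom.inr ℤ ℤ)).index) h
  simp only [map_fst_hermiteLattice, comap_inr_hermiteLattice ha,
    comap_inr_hermiteLattice ha', Int.index_zmultiples, Int.natAbs_natCast] at hfst hinr
  subst hfst hinr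
  have hmem : ((a : ℤ), (b' : ℤ)) ∈ hermiteLattice a b d := h ▸ subset_closure (by simp)
  obtain ⟨m, k, hm⟩ := mem_hermiteLattice.1 hmem
  simp only [Prod.mk.injEq] at hm
  obtain rfl : m = 1 := by simpa [ha] using hm.1
  have hmod : b ≡ b' [MOD d] := Int.natCast_modEq_iff.1 <| by
    rw [← hm.2]
    simp [Int.ModEq]
  exact ⟨rfl, hmod.eq_of_lt_of_lt hb hb', rfl⟩

theorem exists_eq_hermiteLattice {H : AddSubgroup (ℤ × ℤ)} (hH : H.index ≠ 0) :
    ∃ a d b : ℕ, a * d = H.index ∧ b < d ∧ hermiteLattice a b d = H := by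
  set a := (H.map (AddMonoidHom.fst ℤ ℤ)).index
  set d := (H.comap (AddMonoidHom.inr ℤ ℤ)).index
  have hidx : H.index = a * d := index_eq_index_map_fst_mul_index_comap_inr H
  have ha : a ≠ 0 := left_ne_zero_of_mul (hidx ▸ hH)
  have hd : 0 < d := Nat.pos_of_ne_zero (right_ne_zero_of_mul (hidx ▸ hH))
  obtain ⟨⟨_, c⟩, hac, rfl⟩ : (a : ℤ) ∈ H.map (AddMonoidHom.fst ℤ ℤ) := by
    simpa using nsmul_index_mem (H.map (AddMonoidHom.fst ℤ ℤ)) (1 : ℤ)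
  have hd_mem : ((0 : ℤ), (d : ℤ)) ∈ H := by
    simpa using nsmul_index_mem (H.comap (AddMonoidHom.inr ℤ ℤ)) (1 : ℤ)
  set b := (c % d).toNat
  have hb : (b : ℤ) = c % d := Int.toNat_of_nonneg (Int.emod_nonneg _ (by omega))
  have hbd : b < d := by
    have := Int.emod_lt_of_pos c (Int.natCast_pos.2 hd)
    omega
  have hab_mem : ((a : ℤ), (b : ℤ)) ∈ H := by
    convert H.sub_mem hac (H.zsmul_mem hd_mem (c / d)) using 1
    simp [hb, Int.emod_def, mul_comm]
  have hle : hermiteLattice a b d ≤ H := by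
    rw [hermiteLattice, closure_le]
    rintro p (rfl | rfl) <;> assumption
  -- `hle` is an equality since both sides have index `a * d ≠ 0`.
  refine ⟨a, d, b, hidx.symm, hbd, le_antisymm hle ?_⟩
  rw [← relIndex_eq_one]
  have := relIndex_mul_index hle
  rw [index_hermiteLattice ha, ← hidx] at this
  exact (Nat.mul_eq_right hH).1 this

theorem index_eq_iff_exists_eq_hermiteLattice {H : AddSubgroup (ℤ × ℤ)} {n : ℕ}
    (hn : n ≠ 0) :
    H.index = n ↔ ∃ a d b : ℕ, a * d = n ∧ b < d ∧ hermiteLattice a b d = H := by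
  refine ⟨fun h ↦ h ▸ exists_eq_hermiteLattice (h ▸ hn), ?_⟩
  rintro ⟨a, d, b, rfl, -, rfl⟩
  exact index_hermiteLattice (left_ne_zero_of_mul hn) b d

/-- The set of additive subgroups of `ℤ × ℤ` of index `n ≥ 1` is finite and
has exactly `σ(n) = ∑_{d ∣ n} d` elements (the count of degree-`n` connected
unbranched covers of the torus with a marked point). -/
theorem card_index_n_addSubgroups_int_prod (n : ℕ) (hn : 1 ≤ n) :
    {H : AddSubgroup (ℤ × ℤ) | H.index = n}.Finite ∧
      {H : AddSubgroup (ℤ × ℤ) | H.index = n}.ncard = ∑ d ∈ n.divisors, d := by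
  have hn0 : n ≠ 0 := Nat.one_le_iff_ne_zero.1 hn
  let S : Finset ((_ : ℕ × ℕ) × ℕ) :=
    n.divisorsAntidiagonal.sigma fun p ↦ Finset.range p.2
  let L : ((_ : ℕ × ℕ) × ℕ) → AddSubgroup (ℤ × ℤ) :=
    fun x ↦ hermiteLattice x.1.1 x.2 x.1.2
  have hset : {H : AddSubgroup (ℤ × ℤ) | H.index = n} = L '' S := by
    ext H
    simp [S, L, index_eq_iff_exists_eq_hermiteLattice hn0, hn0, and_assoc]
  have hinj : Set.InjOn L S := by
    rintro ⟨⟨a, d⟩, b⟩ hx ⟨⟨a', d'⟩, b'⟩ hx' h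
    simp only [S, Finset.coe_sigma, Set.mem_sigma_iff, Finset.mem_coe,
      Nat.mem_divisorsAntidiagonal, Finset.mem_range] at hx hx'
    obtain ⟨rfl, rfl, rfl⟩ := (hermiteLattice_inj (left_ne_zero_of_mul (hx.1.1 ▸ hn0))
      (left_ne_zero_of_mul (hx'.1.1 ▸ hn0)) hx.2 hx'.2).1 h
    rfl
  have hcard : S.card = ∑ d ∈ n.divisors, d := by
    rw [Finset.card_sigma]
    simpa using Nat.sum_divisorsAntidiagonal' (f := fun _ d ↦ d)
  refine ⟨hset ▸ S.finite_toSet.image L, ?_⟩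
  rw [hset, hinj.ncard_image, Set.ncard_coe_finset, hcard]
end

section
/- Let f : ℝ² → ℂ be twice continuously differentiable and 2π-periodic in its second variable, i.e. f(t, θ + 2π) = f(t, θ) for all (t, θ). Write u = Re f, v = Im f, and ∂̄f := ½(∂₁f + i·∂₂f). Then for all real numbers a ≤ b: ∫_a^b ∫_0^{2π} (|∂₁f|² + |∂₂f|²) dθ dt = 4·∫_a^b ∫_0^{2π} |∂̄f|² dθ dt + 2·(B(b) − B(a)), where B(t) := ∫_0^{2π} u(t,θ)·∂₂v(t,θ) dθ. (This is formula (5.5) of the paper: integrating the identity |df|² = 4|∂̄f|² + 2 d(u dv) over a cylinder via Stokes' theorem, with the θ-boundary terms cancelling by periodicity.) -/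
/-!
Pointwise, `|∂₁f|² + |∂₂f|² = 4|∂̄f|² + 2(u₁v₂ − u₂v₁)`, and by the symmetry of second
derivatives the Jacobian `u₁v₂ − u₂v₁` is `∂₁(u ∂₂v) − ∂₂(u ∂₁v)`, the coefficient of `d(u dv)`.
Green's theorem on `[a, b] × [0, 2π]` turns its integral into boundary integrals; those along
`θ = 0` and `θ = 2π` cancel by periodicity, and those along `t = a` and `t = b` are `B(a)`, `B(b)`.
-/

open Real intervalIntegral

theorem Complex.norm_sq_add_norm_sq_eq (z w : ℂ) :
    ‖z‖ ^ 2 + ‖w‖ ^ 2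
      = 4 * ‖(1 / 2 : ℂ) * (z + I * w)‖ ^ 2 + 2 * (z.re * w.im - z.im * w.re) := by
  simp only [norm_mul, mul_pow, ← normSq_eq_norm_sq, normSq_apply, add_re, add_im, mul_re,
    mul_im, I_re, I_im]
  norm_num
  ring

theorem Function.Periodic.fderiv {𝕜 E F : Type*} [NontriviallyNormedField 𝕜]
    [NormedAddCommGroup E] [NormedSpace 𝕜 E] [NormedAddCommGroup F] [NormedSpace 𝕜 F] {f : E → F}
    {c : E} (h : Function.Periodic f c) : Function.Periodic (fderiv 𝕜 f) c := fun x => by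
  rw [← fderiv_comp_add_right, show (fun x => f (x + c)) = f from funext h]

section

variable {E : Type*} [NormedAddCommGroup E] [NormedSpace ℝ E]

theorem fderiv_re_apply {f : E → ℂ} {p : E} (hf : DifferentiableAt ℝ f p) (w : E) :
    fderiv ℝ (fun q => (f q).re) p w = (fderiv ℝ f p w).re := by
  have h : HasFDerivAt (fun q => (f q).re) (Complex.reCLM.comp (fderiv ℝ f p)) p :=
    Complex.reCLM.hasFDerivAt.comp p hf.hasFDerivAt
  rw [h.fderiv]; rfl

theorem fderiv_im_apply {f : E → ℂ} {p : E} (hf : DifferentiableAt ℝ f p) (w : E) :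
    fderiv ℝ (fun q => (f q).im) p w = (fderiv ℝ f p w).im := by
  have h : HasFDerivAt (fun q => (f q).im) (Complex.imCLM.comp (fderiv ℝ f p)) p :=
    Complex.imCLM.hasFDerivAt.comp p hf.hasFDerivAt
  rw [h.fderiv]; rfl

variable {u v : E → ℝ} {p : E}

theorem fderiv_mul_fderiv_apply (hu : DifferentiableAt ℝ u p) (hv : ContDiffAt ℝ 2 v p)
    (w w' : E) :
    fderiv ℝ (fun q => u q * fderiv ℝ v q w) p w'
      = fderiv ℝ u p w' * fderiv ℝ v p w + u p * fderiv ℝ (fderiv ℝ v) p w' w := by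
  have hv' : DifferentiableAt ℝ (fderiv ℝ v) p :=
    (hv.fderiv_right (m := 1) le_rfl).differentiableAt one_ne_zero
  rw [fderiv_fun_mul hu (hv'.clm_apply (differentiableAt_const w)),
    fderiv_clm_apply hv' (differentiableAt_const w)]
  simp only [fderiv_fun_const, Pi.zero_apply, ContinuousLinearMap.comp_zero, zero_add, add_apply,
    smul_apply, ContinuousLinearMap.flip_apply, smul_eq_mul]
  ring

/-- `d(u dv) = du ∧ dv`, evaluated on the pair `(w', w)`. -/
theorem fderiv_mul_fderiv_apply_sub_swap (hu : DifferentiableAt ℝ u p) (hv : ContDiffAt ℝ 2 v p)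
    (w w' : E) :
    fderiv ℝ (fun q => u q * fderiv ℝ v q w) p w' - fderiv ℝ (fun q => u q * fderiv ℝ v q w') p w
      = fderiv ℝ u p w' * fderiv ℝ v p w - fderiv ℝ u p w * fderiv ℝ v p w' := by
  rw [fderiv_mul_fderiv_apply hu hv, fderiv_mul_fderiv_apply hu hv,
    hv.isSymmSndFDerivAt (by simp) w' w]
  ring

/-- `|df|² = 4 |∂̄f|² + 2 d(u dv)` for `f = u + i v`, where `∂̄ = ½ (∂_w + i ∂_w')`. -/
theorem norm_fderiv_sq_add_norm_fderiv_sq_eq {f : E → ℂ} (hf : ContDiffAt ℝ 2 f p) (w w' : E) :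
    ‖fderiv ℝ f p w‖ ^ 2 + ‖fderiv ℝ f p w'‖ ^ 2
      = 4 * ‖(1 / 2 : ℂ) * (fderiv ℝ f p w + Complex.I * fderiv ℝ f p w')‖ ^ 2
        + 2 * (fderiv ℝ (fun q => (f q).re * fderiv ℝ (fun q => (f q).im) q w') p w
          - fderiv ℝ (fun q => (f q).re * fderiv ℝ (fun q => (f q).im) q w) p w') := by
  have hfp := hf.differentiableAt two_ne_zero
  have hu : ContDiffAt ℝ 2 (fun q => (f q).re) p := Complex.reCLM.contDiff.contDiffAt.comp p hf
  have hv : ContDiffAt ℝ 2 (fun q => (f q).im) p := Complex.imCLM.contDiff.contDiffAt.comp p hf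
  rw [Complex.norm_sq_add_norm_sq_eq,
    fderiv_mul_fderiv_apply_sub_swap (hu.differentiableAt two_ne_zero) hv,
    fderiv_re_apply hfp, fderiv_re_apply hfp, fderiv_im_apply hfp, fderiv_im_apply hfp]
  ring

theorem integral2_add_of_continuous {F G : ℝ → ℝ → E} (hF : Continuous (Function.uncurry F))
    (hG : Continuous (Function.uncurry G)) (a b c d : ℝ) :
    ∫ x in a..b, ∫ y in c..d, (F x y + G x y)
      = (∫ x in a..b, ∫ y in c..d, F x y) + ∫ x in a..b, ∫ y in c..d, G x y := by
  have inner (x : ℝ) :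
      ∫ y in c..d, (F x y + G x y) = (∫ y in c..d, F x y) + ∫ y in c..d, G x y :=
    integral_add ((hF.comp (Continuous.prodMk_right x)).intervalIntegrable _ _)
      ((hG.comp (Continuous.prodMk_right x)).intervalIntegrable _ _)
  simp_rw [inner]
  exact integral_add
    ((continuous_parametric_intervalIntegral_of_continuous' hF c d).intervalIntegrable _ _)
    ((continuous_parametric_intervalIntegral_of_continuous' hG c d).intervalIntegrable _ _)

/-- Green's theorem on the rectangle `[a, b] × [c, d]` for the form `P dy + Q dx`. -/
theorem integral2_fderiv_fst_sub_fderiv_snd {P Q : ℝ × ℝ → E} (hP : ContDiff ℝ 1 P)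
    (hQ : ContDiff ℝ 1 Q) (a b c d : ℝ) :
    ∫ x in a..b, ∫ y in c..d, (fderiv ℝ P (x, y) (1, 0) - fderiv ℝ Q (x, y) (0, 1))
      = ((∫ y in c..d, P (b, y)) - ∫ y in c..d, P (a, y))
        - ((∫ x in a..b, Q (x, d)) - ∫ x in a..b, Q (x, c)) := by
  have hdP (x : ℝ × ℝ) : HasFDerivAt P (fderiv ℝ P x) x :=
    (hP.differentiable one_ne_zero x).hasFDerivAt
  have hdQ (x : ℝ × ℝ) : HasFDerivAt (fun x => -Q x) (-fderiv ℝ Q x) x :=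
    (hQ.differentiable one_ne_zero x).hasFDerivAt.neg
  have hcont : Continuous fun x => fderiv ℝ P x (1, 0) + (-fderiv ℝ Q x) (0, 1) :=
    ((hP.continuous_fderiv one_ne_zero).clm_apply continuous_const).add
      ((hQ.continuous_fderiv one_ne_zero).neg.clm_apply continuous_const)
  have := MeasureTheory.integral2_divergence_prod_of_hasFDerivAt P (fun x => -Q x) (fderiv ℝ P)
    (fun x => -fderiv ℝ Q x) a c b d hP.continuous.continuousOn hQ.continuous.neg.continuousOn
    (fun x _ => hdP x) (fun x _ => hdQ x)
    (hcont.continuousOn.integrableOn_compact (isCompact_uIcc.prod isCompact_uIcc))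
  simp only [neg_apply, ← sub_eq_add_neg, intervalIntegral.integral_neg] at this
  rw [this]
  abel

end

theorem energy_stokes_identity_general (f : ℝ × ℝ → ℂ)
    (hf : ContDiff ℝ 2 f)
    (hper : ∀ t θ : ℝ, f (t, θ + 2 * π) = f (t, θ))
    (a b : ℝ) :
    (∫ t in a..b, ∫ θ in (0:ℝ)..(2 * π),
        (‖fderiv ℝ f (t, θ) (1, 0)‖ ^ 2 + ‖fderiv ℝ f (t, θ) (0, 1)‖ ^ 2))
      = 4 * (∫ t in a..b, ∫ θ in (0:ℝ)..(2 * π),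
            ‖(1 / 2 : ℂ) * (fderiv ℝ f (t, θ) (1, 0) + Complex.I * fderiv ℝ f (t, θ) (0, 1))‖ ^ 2)
        + 2 * ((∫ θ in (0:ℝ)..(2 * π),
                  (f (b, θ)).re * fderiv ℝ (fun q => (f q).im) (b, θ) (0, 1))
             - (∫ θ in (0:ℝ)..(2 * π),
                  (f (a, θ)).re * fderiv ℝ (fun q => (f q).im) (a, θ) (0, 1))) := by
  set v : ℝ × ℝ → ℝ := fun q => (f q).im
  have hv : ContDiff ℝ 2 v := Complex.imCLM.contDiff.comp hf
  have hu_mul_dv (w : ℝ × ℝ) : ContDiff ℝ 1 fun q => (f q).re * fderiv ℝ v q w :=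
    ((Complex.reCLM.contDiff.comp hf).of_le one_le_two).mul
      ((hv.fderiv_right one_add_one_eq_two.le).clm_apply contDiff_const)
  have hf_periodic : Function.Periodic f (0, 2 * π) := fun ⟨t, θ⟩ => by
    simp only [Prod.mk_add_mk, add_zero, hper]
  have hv_periodic : Function.Periodic v (0, 2 * π) := hf_periodic.comp Complex.im
  have hboundary_periodic (t : ℝ) : (f (t, 2 * π)).re * fderiv ℝ v (t, 2 * π) (1, 0)
      = (f (t, 0)).re * fderiv ℝ v (t, 0) (1, 0) := by
    rw [show (t, 2 * π) = (t, 0) + (0, 2 * π) by simp, hf_periodic, hv_periodic.fderiv]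
  have hdf := hf.continuous_fderiv two_ne_zero
  have hdP := (hu_mul_dv (0, 1)).continuous_fderiv one_ne_zero
  have hdQ := (hu_mul_dv (1, 0)).continuous_fderiv one_ne_zero
  simp_rw [fun p => norm_fderiv_sq_add_norm_fderiv_sq_eq (hf.contDiffAt (x := p)) (1, 0) (0, 1)]
  rw [integral2_add_of_continuous (by fun_prop) (by fun_prop)]
  simp_rw [integral_const_mul]
  rw [integral2_fderiv_fst_sub_fderiv_snd (hu_mul_dv (0, 1)) (hu_mul_dv (1, 0))]
  simp_rw [hboundary_periodic, sub_self, sub_zero]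

/-- Formula (5.5): for `f : ℝ² → ℂ` twice continuously differentiable and `2π`-periodic
in the second variable, integrating `|df|² = 4|∂̄f|² + 2 d(u dv)` over the cylinder
`[a,b] × [0,2π]` gives
`∫∫ |df|² = 4 ∫∫ |∂̄f|² + 2(B(b) − B(a))`, where `B(t) = ∫_0^{2π} u(t,θ)·∂₂v(t,θ) dθ`. -/
theorem energy_stokes_identity (f : ℝ × ℝ → ℂ)
    (hf : ContDiff ℝ 2 f)
    (hper : ∀ t θ : ℝ, f (t, θ + 2 * π) = f (t, θ))
    (a b : ℝ) (hab : a ≤ b) :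
    (∫ t in a..b, ∫ θ in (0:ℝ)..(2 * π),
        (‖fderiv ℝ f (t, θ) (1, 0)‖ ^ 2 + ‖fderiv ℝ f (t, θ) (0, 1)‖ ^ 2))
      = 4 * (∫ t in a..b, ∫ θ in (0:ℝ)..(2 * π),
            ‖(1 / 2 : ℂ) * (fderiv ℝ f (t, θ) (1, 0) + Complex.I * fderiv ℝ f (t, θ) (0, 1))‖ ^ 2)
        + 2 * ((∫ θ in (0:ℝ)..(2 * π),
                  (f (b, θ)).re * fderiv ℝ (fun q => (f q).im) (b, θ) (0, 1))
             - (∫ θ in (0:ℝ)..(2 * π),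
                  (f (a, θ)).re * fderiv ℝ (fun q => (f q).im) (a, θ) (0, 1))) :=
  energy_stokes_identity_general f hf hper a b
end

section
/- Let δ ∈ (0,1], μ > 0, T > 0, and set ρ(t) := (2μ·cosh(2t))^{1/2}. Then every continuously differentiable function w : ℝ → ℝ satisfies ∫_{−T}^{T} ρ(t)^δ·w(t)² dt ≤ (16/δ²)·∫_{−T}^{T} ρ(t)^δ·w′(t)² dt + (4/δ)·ρ(T)^δ·(w(T)² + w(−T)²). (This is the weighted Poincaré inequality (8.3) of the paper — obtained by writing ρ^δ as the derivative of ψ(t) = ∫_0^t ρ^δ and integrating by parts — which controls the weighted L² norm of a 1-form on the neck by its derivative and boundary values.) -/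
/-!
Write the weight `ρ^δ` as the derivative of its primitive `ψ(t) = ∫₀ᵗ ρ^δ` and integrate
`ρ^δ w²` by parts: this leaves the boundary terms `ψ w²` and the cross term `-∫ 2 ψ w w'`.
Because `ρ(t)^δ` is comparable to `e^{δ|t|}`, the primitive grows no faster than the weight itself,
`|ψ| ≤ (2/δ) ρ^δ`; then AM-GM bounds the cross term by `½ ∫ ρ^δ w² + (8/δ²) ∫ ρ^δ w'²`, and the
first half is absorbed into the left-hand side.
-/

open Real Set intervalIntegral

lemma neg_two_mul_mul_le_of_abs_le {x y ψ ρ C : ℝ} (hρ : 0 ≤ ρ) (hψ : |ψ| ≤ C * ρ) :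
    -(2 * x * y * ψ) ≤ ρ * x ^ 2 / 2 + 2 * C ^ 2 * ρ * y ^ 2 := by
  have hxy : -(2 * x * y * ψ) ≤ 2 * (|x| * |y|) * (C * ρ) :=
    calc -(2 * x * y * ψ) ≤ |2 * x * y * ψ| := neg_le_abs _
      _ = 2 * (|x| * |y|) * |ψ| := by simp only [abs_mul, abs_two, mul_assoc]
      _ ≤ 2 * (|x| * |y|) * (C * ρ) := by gcongr
  have amgm : 0 ≤ ρ * (|x| - 2 * C * |y|) ^ 2 := by positivity
  have expand : ρ * (|x| - 2 * C * |y|) ^ 2 =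
      ρ * x ^ 2 - 4 * C * ρ * (|x| * |y|) + 4 * C ^ 2 * ρ * y ^ 2 := by
    linear_combination ρ * sq_abs x + 4 * C ^ 2 * ρ * sq_abs y
  linarith

theorem integral_mul_sq_le_of_abs_primitive_le {ρ ψ w w' : ℝ → ℝ} {a b C : ℝ} (hab : a ≤ b)
    (hρ : Continuous ρ) (hρ0 : ∀ t ∈ Icc a b, 0 ≤ ρ t) (hψ : ∀ t, HasDerivAt ψ (ρ t) t)
    (hψρ : ∀ t ∈ Icc a b, |ψ t| ≤ C * ρ t)
    (hw : ∀ t, HasDerivAt w (w' t) t) (hw' : Continuous w') :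
    ∫ t in a..b, ρ t * w t ^ 2 ≤
      4 * C ^ 2 * (∫ t in a..b, ρ t * w' t ^ 2) + 2 * C * (ρ b * w b ^ 2 + ρ a * w a ^ 2) := by
  have hwc : Continuous w := continuous_iff_continuousAt.2 fun t ↦ (hw t).continuousAt
  have hψc : Continuous ψ := continuous_iff_continuousAt.2 fun t ↦ (hψ t).continuousAt
  have hsq : ∀ t, HasDerivAt (fun t ↦ w t ^ 2) (2 * w t * w' t) t := fun t ↦ by
    simpa [mul_comm, mul_left_comm] using (hw t).fun_pow 2
  have by_parts : ∫ t in a..b, ρ t * w t ^ 2 =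
      ψ b * w b ^ 2 - ψ a * w a ^ 2 - ∫ t in a..b, 2 * w t * w' t * ψ t := by
    simp only [mul_comm (ρ _), mul_comm (ψ _) (w _ ^ 2)]
    exact integral_mul_deriv_eq_deriv_mul (fun t _ ↦ hsq t) (fun t _ ↦ hψ t)
      ((by fun_prop : Continuous fun t ↦ 2 * w t * w' t).intervalIntegrable _ _)
      (hρ.intervalIntegrable _ _)
  have boundary : ψ b * w b ^ 2 - ψ a * w a ^ 2 ≤ C * (ρ b * w b ^ 2 + ρ a * w a ^ 2) := by
    have hb := hψρ b ⟨hab, le_rfl⟩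
    have ha := hψρ a ⟨le_rfl, hab⟩
    nlinarith [le_abs_self (ψ b), neg_abs_le (ψ a), sq_nonneg (w a), sq_nonneg (w b)]
  have cross : -∫ t in a..b, 2 * w t * w' t * ψ t ≤
      (∫ t in a..b, ρ t * w t ^ 2) / 2 + 2 * C ^ 2 * ∫ t in a..b, ρ t * w' t ^ 2 := by
    rw [← integral_neg, ← integral_div, ← integral_const_mul, ← integral_add
      ((by fun_prop : Continuous fun t ↦ ρ t * w t ^ 2 / 2).intervalIntegrable _ _)
      ((by fun_prop : Continuous fun t ↦ 2 * C ^ 2 * (ρ t * w' t ^ 2)).intervalIntegrable _ _)]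
    refine integral_mono_on hab ((by fun_prop : Continuous _).intervalIntegrable _ _)
      ((by fun_prop : Continuous _).intervalIntegrable _ _) fun t ht ↦ ?_
    linarith [neg_two_mul_mul_le_of_abs_le (x := w t) (y := w' t) (hρ0 t ht) (hψρ t ht)]
  linear_combination 2 * by_parts + 2 * boundary + 2 * cross

lemma exp_abs_le_two_mul_cosh (x : ℝ) : exp |x| ≤ 2 * cosh x := by
  rw [← cosh_abs, cosh_eq]
  linarith [exp_pos (-|x|)]

lemma cosh_le_exp_abs (x : ℝ) : cosh x ≤ exp |x| := by
  rw [← cosh_abs, cosh_eq]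
  linarith [exp_le_exp.2 (neg_le_self (abs_nonneg x))]

lemma exp_abs_two_mul (t : ℝ) : exp |2 * t| = exp |t| ^ 2 := by
  rw [abs_mul, abs_two, ← exp_nat_mul]
  norm_num

lemma mul_exp_abs_le_sqrt {μ : ℝ} (hμ : 0 ≤ μ) (t : ℝ) :
    √μ * exp |t| ≤ √(2 * μ * cosh (2 * t)) := by
  rw [le_sqrt (by positivity) (by positivity), mul_pow, sq_sqrt hμ, ← exp_abs_two_mul]
  nlinarith [exp_abs_le_two_mul_cosh (2 * t)]

lemma sqrt_le_mul_exp_abs {μ : ℝ} (hμ : 0 ≤ μ) (t : ℝ) :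
    √(2 * μ * cosh (2 * t)) ≤ √2 * (√μ * exp |t|) := by
  rw [sqrt_le_left (by positivity), mul_pow, mul_pow, sq_sqrt hμ, sq_sqrt zero_le_two,
    ← exp_abs_two_mul]
  nlinarith [cosh_le_exp_abs (2 * t)]

/-- `neckWeight μ δ t = ρ(t)^δ`. -/
noncomputable def neckWeight (μ δ t : ℝ) : ℝ := √(2 * μ * cosh (2 * t)) ^ δ

lemma neckWeight_neg (μ δ t : ℝ) : neckWeight μ δ (-t) = neckWeight μ δ t := by
  simp only [neckWeight, mul_neg, cosh_neg]

lemma neckWeight_nonneg (μ δ t : ℝ) : 0 ≤ neckWeight μ δ t :=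
  rpow_nonneg (sqrt_nonneg _) δ

lemma continuous_neckWeight (μ : ℝ) {δ : ℝ} (hδ : 0 ≤ δ) : Continuous (neckWeight μ δ) :=
  (by fun_prop : Continuous fun t ↦ √(2 * μ * cosh (2 * t))).rpow_const fun _ ↦ Or.inr hδ

lemma sqrt_mul_exp_abs_rpow (μ δ t : ℝ) : (√μ * exp |t|) ^ δ = √μ ^ δ * exp (δ * |t|) := by
  rw [mul_rpow (sqrt_nonneg μ) (exp_pos _).le, ← exp_mul, mul_comm |t|]

lemma rpow_mul_exp_le_neckWeight {μ δ : ℝ} (hμ : 0 ≤ μ) (hδ : 0 ≤ δ) (t : ℝ) :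
    √μ ^ δ * exp (δ * |t|) ≤ neckWeight μ δ t :=
  sqrt_mul_exp_abs_rpow μ δ t ▸ rpow_le_rpow (by positivity) (mul_exp_abs_le_sqrt hμ t) hδ

lemma neckWeight_le_rpow_mul_exp {μ δ : ℝ} (hμ : 0 ≤ μ) (hδ : 0 ≤ δ) (t : ℝ) :
    neckWeight μ δ t ≤ √2 ^ δ * (√μ ^ δ * exp (δ * |t|)) := by
  rw [← sqrt_mul_exp_abs_rpow, ← mul_rpow (sqrt_nonneg 2) (by positivity)]
  exact rpow_le_rpow (sqrt_nonneg _) (sqrt_le_mul_exp_abs hμ t) hδ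

lemma integral_neckWeight_le {μ δ t : ℝ} (hμ : 0 ≤ μ) (hδ : 0 < δ) (ht : 0 ≤ t) :
    ∫ s in (0 : ℝ)..t, neckWeight μ δ s ≤ √2 ^ δ / δ * neckWeight μ δ t := by
  have hexp : Continuous fun s ↦ √2 ^ δ * (√μ ^ δ * exp (δ * s)) := by fun_prop
  calc ∫ s in (0 : ℝ)..t, neckWeight μ δ s
      ≤ ∫ s in (0 : ℝ)..t, √2 ^ δ * (√μ ^ δ * exp (δ * s)) := by
        refine integral_mono_on ht ((continuous_neckWeight μ hδ.le).intervalIntegrable _ _)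
          (hexp.intervalIntegrable _ _) fun s hs ↦ ?_
        simpa only [abs_of_nonneg hs.1] using neckWeight_le_rpow_mul_exp hμ hδ.le s
    _ = √2 ^ δ / δ * (√μ ^ δ * (exp (δ * t) - 1)) := by
        simp only [integral_const_mul, integral_comp_mul_left (fun s ↦ exp s) hδ.ne',
          integral_exp, mul_zero, exp_zero, smul_eq_mul]
        ring
    _ ≤ √2 ^ δ / δ * (√μ ^ δ * exp (δ * t)) := by gcongr; linarith
    _ ≤ √2 ^ δ / δ * neckWeight μ δ t := by
        gcongr
        simpa only [abs_of_nonneg ht] using rpow_mul_exp_le_neckWeight hμ hδ.le t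

lemma integral_neckWeight_neg (μ δ t : ℝ) :
    ∫ s in (0 : ℝ)..-t, neckWeight μ δ s = -∫ s in (0 : ℝ)..t, neckWeight μ δ s := by
  calc ∫ s in (0 : ℝ)..-t, neckWeight μ δ s = ∫ s in (0 : ℝ)..-t, neckWeight μ δ (-s) := by
        simp only [neckWeight_neg]
    _ = ∫ s in t..0, neckWeight μ δ s := by
        rw [integral_comp_neg fun s ↦ neckWeight μ δ s, neg_neg, neg_zero]
    _ = -∫ s in (0 : ℝ)..t, neckWeight μ δ s := integral_symm _ _

lemma abs_integral_neckWeight_le {μ δ : ℝ} (hμ : 0 ≤ μ) (hδ0 : 0 < δ) (hδ2 : δ ≤ 2) (t : ℝ) :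
    |∫ s in (0 : ℝ)..t, neckWeight μ δ s| ≤ 2 / δ * neckWeight μ δ t := by
  have hsqrt : √2 ^ δ ≤ 2 := by
    calc √2 ^ δ ≤ √2 ^ (2 : ℝ) := rpow_le_rpow_of_exponent_le (one_le_sqrt.2 one_le_two) hδ2
      _ = 2 := by rw [rpow_two, sq_sqrt zero_le_two]
  have of_nonneg : ∀ t, 0 ≤ t →
      |∫ s in (0 : ℝ)..t, neckWeight μ δ s| ≤ 2 / δ * neckWeight μ δ t := fun t ht ↦ by
    rw [abs_of_nonneg (integral_nonneg ht fun s _ ↦ neckWeight_nonneg μ δ s)]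
    exact (integral_neckWeight_le hμ hδ0 ht).trans
      (mul_le_mul_of_nonneg_right (by gcongr) (neckWeight_nonneg μ δ t))
  rcases le_total 0 t with ht | ht
  · exact of_nonneg t ht
  · rw [← neg_neg t, integral_neckWeight_neg, abs_neg, neckWeight_neg]
    exact of_nonneg (-t) (neg_nonneg.2 ht)

/-- The weighted Poincaré inequality (8.3): with `ρ(t) = (2μ cosh 2t)^{1/2}` and
`δ ∈ (0,1]`, every `C¹` function `w : ℝ → ℝ` satisfies
`∫_{−T}^{T} ρ^δ w² ≤ (16/δ²) ∫_{−T}^{T} ρ^δ (w′)² + (4/δ) ρ(T)^δ (w(T)² + w(−T)²)`. -/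
theorem weighted_poincare (δ μ T : ℝ) (hδ0 : 0 < δ) (hδ1 : δ ≤ 1)
    (hμ : 0 < μ) (hT : 0 < T) (w : ℝ → ℝ) (hw : ContDiff ℝ 1 w) :
    (∫ t in (-T)..T, Real.sqrt (2 * μ * Real.cosh (2 * t)) ^ δ * w t ^ 2)
      ≤ (16 / δ ^ 2) *
          (∫ t in (-T)..T, Real.sqrt (2 * μ * Real.cosh (2 * t)) ^ δ * deriv w t ^ 2)
        + (4 / δ) * Real.sqrt (2 * μ * Real.cosh (2 * T)) ^ δ * (w T ^ 2 + w (-T) ^ 2) := by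
  have hρ := continuous_neckWeight μ hδ0.le
  have key := integral_mul_sq_le_of_abs_primitive_le (neg_le_self hT.le) hρ
    (fun t _ ↦ neckWeight_nonneg μ δ t) (fun t ↦ (hρ.integral_hasStrictDerivAt 0 t).hasDerivAt)
    (fun t _ ↦ abs_integral_neckWeight_le hμ.le hδ0 (by linarith) t)
    (fun t ↦ ((hw.differentiable one_ne_zero) t).hasDerivAt) (hw.continuous_deriv le_rfl)
  rw [neckWeight_neg] at key
  refine key.trans_eq ?_
  simp only [neckWeight]
  ring
end
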